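/- arXiv:1401.5261 — 3 statements merged into one kernel-verified Lean document; each statement's English description precedes it below -/
import Mathlib

section
/- If μ and ν are n-equivalent assignments (μ ≡ₙ ν), then for every well-formed formula α in variables X₁,…,Xₙ of Gödel logic, the Gödel semantic evaluation of α under μ equals 1 if and only if its evaluation under ν equals 1. -/
open unitInterval

/-- The extended value sequence 0, μ(X_{sg(1)}), …, μ(X_{sg(n)}), 1. -/
def seq (n : ℕ) (μ : Fin n → I) (sg : Equiv.Perm (Fin n)) : Fin (n + 2) → I :=
  fun i =>
    if h0 : (i : ℕ) = 0 then 0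
    else if h : (i : ℕ) ≤ n then μ (sg ⟨(i : ℕ) - 1, by omega⟩) else 1

/-- μ ≡ₙ ν : some permutation sorts both, with identical equality/strictness pattern. -/
def nEquiv (n : ℕ) (μ ν : Fin n → I) : Prop :=
  ∃ sg : Equiv.Perm (Fin n),
    Monotone (seq n μ sg) ∧ Monotone (seq n ν sg) ∧
      ∀ i : Fin (n + 1),
        (seq n μ sg i.castSucc = seq n μ sg i.succ ↔
          seq n ν sg i.castSucc = seq n ν sg i.succ)

/-- Formulas of Gödel logic over n variables. -/
inductive Fml (n : ℕ) : Type
  | var : Fin n → Fml n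
  | bot : Fml n
  | top : Fml n
  | and : Fml n → Fml n → Fml n
  | or : Fml n → Fml n → Fml n
  | imp : Fml n → Fml n → Fml n
  | neg : Fml n → Fml n

open Classical in
/-- Gödel semantics. -/
noncomputable def eval {n : ℕ} (μ : Fin n → I) : Fml n → I
  | .var i => μ i
  | .bot => 0
  | .top => 1
  | .and a b => min (eval μ a) (eval μ b)
  | .or a b => max (eval μ a) (eval μ b)
  | .imp a b => if eval μ a ≤ eval μ b then 1 else eval μ b
  | .neg a => if eval μ a ≤ (0 : I) then 1 else 0

section Aux
variable {m : ℕ}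

lemma chain_eq (f g : Fin (m + 1) → I) (hf : Monotone f)
    (hfg : ∀ i : Fin m, f i.castSucc = f i.succ → g i.castSucc = g i.succ) :
    ∀ d : ℕ, ∀ i j : Fin (m + 1), (j : ℕ) = (i : ℕ) + d → f i = f j → g i = g j := by
  intro d
  induction d with
  | zero =>
    intro i j hij _
    have : i = j := Fin.ext (by omega)
    rw [this]
  | succ d ih =>
    intro i j hij hfij
    have hpm : (i : ℕ) + d < m := by have := j.isLt; omega
    set p : Fin m := ⟨(i : ℕ) + d, hpm⟩ with hp
    have hjp : j = p.succ := Fin.ext (by simp only [Fin.val_succ, hij, hp]; omega)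
    have hile : i ≤ p.castSucc := by simp [Fin.le_def, hp]
    have hcs : p.castSucc ≤ p.succ := by simp only [Fin.le_def, Fin.coe_castSucc, Fin.val_succ]; omega
    have a1 : f i ≤ f p.castSucc := hf hile
    have a2 : f p.castSucc ≤ f p.succ := hf hcs
    have h1 : f i = f p.castSucc := by
      refine le_antisymm a1 ?_
      calc f p.castSucc ≤ f p.succ := a2
        _ = f i := by rw [← hjp, ← hfij]
    have h2 : f p.castSucc = f p.succ := by
      refine le_antisymm a2 ?_
      calc f p.succ = f j := by rw [hjp]
        _ = f i := hfij.symm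
        _ ≤ f p.castSucc := a1
    have g1 : g i = g p.castSucc := ih i p.castSucc rfl h1
    have g2 : g p.castSucc = g p.succ := hfg p h2
    rw [g1, g2, hjp]

lemma eq_iff_of_pattern (f g : Fin (m + 1) → I) (hf : Monotone f) (hg : Monotone g)
    (hfg : ∀ i : Fin m, f i.castSucc = f i.succ ↔ g i.castSucc = g i.succ)
    (i j : Fin (m + 1)) (hij : i ≤ j) : f i = f j ↔ g i = g j := by
  constructor
  · exact chain_eq f g hf (fun k hk => (hfg k).mp hk) ((j : ℕ) - i) i j (by
      have := Fin.le_def.mp hij; omega)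
  · exact chain_eq g f hg (fun k hk => (hfg k).mpr hk) ((j : ℕ) - i) i j (by
      have := Fin.le_def.mp hij; omega)

lemma le_iff_of_pattern (f g : Fin (m + 1) → I) (hf : Monotone f) (hg : Monotone g)
    (hfg : ∀ i : Fin m, f i.castSucc = f i.succ ↔ g i.castSucc = g i.succ)
    (i j : Fin (m + 1)) : f i ≤ f j ↔ g i ≤ g j := by
  rcases le_or_gt i j with hle | hlt
  · simp [hf hle, hg hle]
  · have hji : j ≤ i := hlt.le
    have e := eq_iff_of_pattern f g hf hg hfg j i hji
    constructor
    · intro hfij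
      have : f j = f i := le_antisymm (hf hji) hfij
      exact (e.mp this).ge
    · intro hgij
      have : g j = g i := le_antisymm (hg hji) hgij
      exact (e.mpr this).ge

end Aux

section Seq
variable {n : ℕ} (μ : Fin n → I) (sg : Equiv.Perm (Fin n))

lemma seq_zero : seq n μ sg ⟨0, by omega⟩ = 0 := by simp [seq]

lemma seq_last : seq n μ sg ⟨n + 1, by omega⟩ = 1 := by simp [seq]

lemma seq_var (i : Fin n) :
    seq n μ sg ⟨(sg.symm i : ℕ) + 1, by omega⟩ = μ i := by
  have h1 : ((sg.symm i : ℕ) + 1) ≤ n := (sg.symm i).isLt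
  simp only [seq]
  rw [dif_neg (by omega), dif_pos h1]
  congr 1
  have : (⟨(sg.symm i : ℕ) + 1 - 1, by omega⟩ : Fin n) = sg.symm i := Fin.ext (by simp)
  rw [this, Equiv.apply_symm_apply]

end Seq

theorem nEquiv_eval_one_iff {n : ℕ} (μ ν : Fin n → I) (h : nEquiv n μ ν) (α : Fml n) :
    eval μ α = 1 ↔ eval ν α = 1 := by
  obtain ⟨sg, hμ, hν, hpat⟩ := h
  set f := seq n μ sg with hf
  set g := seq n ν sg with hg
  have hf0 : f ⟨0, by omega⟩ = (0 : I) := seq_zero μ sg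
  have hg0 : g ⟨0, by omega⟩ = (0 : I) := seq_zero ν sg
  have hfl : f ⟨n + 1, by omega⟩ = (1 : I) := seq_last μ sg
  have hgl : g ⟨n + 1, by omega⟩ = (1 : I) := seq_last ν sg
  have key : ∃ i : Fin (n + 2), eval μ α = f i ∧ eval ν α = g i := by
    induction α with
    | var i =>
      exact ⟨⟨(sg.symm i : ℕ) + 1, by omega⟩, (seq_var μ sg i).symm, (seq_var ν sg i).symm⟩
    | bot => exact ⟨⟨0, by omega⟩, hf0.symm, hg0.symm⟩
    | top => exact ⟨⟨n + 1, by omega⟩, hfl.symm, hgl.symm⟩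
    | and a b iha ihb =>
      obtain ⟨i, hi1, hi2⟩ := iha
      obtain ⟨j, hj1, hj2⟩ := ihb
      by_cases hle : f i ≤ f j
      · refine ⟨i, ?_, ?_⟩
        · simp [eval, hi1, hj1, min_eq_left hle]
        · simp [eval, hi2, hj2, min_eq_left ((le_iff_of_pattern f g hμ hν hpat i j).mp hle)]
      · have hle' : f j ≤ f i := (not_le.mp hle).le
        refine ⟨j, ?_, ?_⟩
        · simp [eval, hi1, hj1, min_eq_right hle']
        · simp [eval, hi2, hj2, min_eq_right ((le_iff_of_pattern f g hμ hν hpat j i).mp hle')]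
    | or a b iha ihb =>
      obtain ⟨i, hi1, hi2⟩ := iha
      obtain ⟨j, hj1, hj2⟩ := ihb
      by_cases hle : f i ≤ f j
      · refine ⟨j, ?_, ?_⟩
        · simp [eval, hi1, hj1, max_eq_right hle]
        · simp [eval, hi2, hj2, max_eq_right ((le_iff_of_pattern f g hμ hν hpat i j).mp hle)]
      · have hle' : f j ≤ f i := (not_le.mp hle).le
        refine ⟨i, ?_, ?_⟩
        · simp [eval, hi1, hj1, max_eq_left hle']
        · simp [eval, hi2, hj2, max_eq_left ((le_iff_of_pattern f g hμ hν hpat j i).mp hle')]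
    | imp a b iha ihb =>
      obtain ⟨i, hi1, hi2⟩ := iha
      obtain ⟨j, hj1, hj2⟩ := ihb
      by_cases hle : f i ≤ f j
      · refine ⟨⟨n + 1, by omega⟩, ?_, ?_⟩
        · simp [eval, hi1, hj1, if_pos hle, hfl.symm]
        · simp [eval, hi2, hj2,
            if_pos ((le_iff_of_pattern f g hμ hν hpat i j).mp hle), hgl.symm]
      · have hle' : ¬ g i ≤ g j := fun hc =>
          hle ((le_iff_of_pattern f g hμ hν hpat i j).mpr hc)
        refine ⟨j, ?_, ?_⟩
        · simp [eval, hi1, hj1, if_neg hle]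
        · simp [eval, hi2, hj2, if_neg hle']
    | neg a iha =>
      obtain ⟨i, hi1, hi2⟩ := iha
      by_cases hle : f i ≤ (0 : I)
      · have hfi : f i = f ⟨0, by omega⟩ := by
          rw [hf0]; exact le_antisymm hle (f i).2.1
        have hgi : g i = (0 : I) := by
          have := (eq_iff_of_pattern f g hμ hν hpat ⟨0, by omega⟩ i (by simp [Fin.le_def])).mp
            hfi.symm
          rw [← this, hg0]
        refine ⟨⟨n + 1, by omega⟩, ?_, ?_⟩
        · simp only [eval, hi1]; rw [if_pos hle, hfl]
        · simp only [eval, hi2]; rw [if_pos hgi.le, hgl]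
      · have hgi : ¬ g i ≤ (0 : I) := by
          intro hc
          have hgi0 : g ⟨0, by omega⟩ = g i := by
            rw [hg0]; exact (le_antisymm hc (g i).2.1).symm
          have := (eq_iff_of_pattern f g hμ hν hpat ⟨0, by omega⟩ i
            (by simp [Fin.le_def])).mpr hgi0
          rw [hf0] at this
          exact hle this.ge
        refine ⟨⟨0, by omega⟩, ?_, ?_⟩
        · simp only [eval, hi1]; rw [if_neg hle, hf0]
        · simp only [eval, hi2]; rw [if_neg hgi, hg0]
  obtain ⟨i, hi1, hi2⟩ := key
  have hile : i ≤ (⟨n + 1, by omega⟩ : Fin (n + 2)) := by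
    simp [Fin.le_def]; omega
  have e := eq_iff_of_pattern f g hμ hν hpat i ⟨n + 1, by omega⟩ hile
  rw [hi1, hi2]
  constructor
  · intro h1
    have h2 : f i = f ⟨n + 1, by omega⟩ := by rw [h1, hfl]
    rw [e.mp h2, hgl]
  · intro h1
    have h2 : g i = g ⟨n + 1, by omega⟩ := by rw [h1, hgl]
    rw [e.mpr h2, hfl]
end

section
/- Let [μ], [ν] ∈ 𝔽ₙ be realized by a family P = {f₁,…,fₙ} of fuzzy sets at points x, y ∈ [0,1] respectively. Then [μ] ≤ [ν] in the forest order if and only if there exists a comparison map λ : [0,1] → [0,1] with λ(fᵢ(y)) = fᵢ(x) for all i ∈ {1,…,n}. -/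
open unitInterval

/-- The forest order on assignments: [μ] ≤ [ν] iff some permutation sorts both, the patterns
agree up to index k, and μ's relations are equalities afterwards. -/
def leAssign (n : ℕ) (μ ν : Fin n → I) : Prop :=
  ∃ sg : Equiv.Perm (Fin n),
    Monotone (seq n μ sg) ∧ Monotone (seq n ν sg) ∧
      ∃ k : ℕ, k ≤ n ∧
        (∀ i : Fin (n + 1), (i : ℕ) ≤ k →
          (seq n μ sg i.castSucc = seq n μ sg i.succ ↔
            seq n ν sg i.castSucc = seq n ν sg i.succ)) ∧
        (∀ i : Fin (n + 1), k < (i : ℕ) →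
          seq n μ sg i.castSucc = seq n μ sg i.succ)

/-- A comparison map: monotone, fixes 0 and 1, and its restriction to [0, inf λ⁻¹(1)]
is an order isomorphism onto [0,1]. -/
def IsComparisonMap (l : I → I) : Prop :=
  Monotone l ∧ l 0 = 0 ∧ l 1 = 1 ∧
    ∃ t : I, IsGLB (l ⁻¹' {1}) t ∧
      StrictMonoOn l (Set.Icc 0 t) ∧ l '' Set.Icc 0 t = Set.univ

/-- [μ] is realized by P = {f₁,…,fₙ} at x: the values fᵢ(x) share μ's order/equality pattern. -/
def realizedAt {n : ℕ} (f : Fin n → I → I) (μ : Fin n → I) (x : I) : Prop :=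
  nEquiv n μ fun i => f i x

/-! Sorting the values by a common permutation reduces both sides to two monotone sequences
`A = (0, f(x)∘s, 1)` and `B = (0, f(y)∘s, 1)` carrying the tie patterns of `μ` and `ν`, and both
sides then say that `A` has exactly the ties of `B` below level `1`. A comparison map `λ` with
`λ ∘ B = A` forces this because it is injective below level `1`. Conversely, the piecewise-linear
map through the points `(B q, A q)` is a comparison map, `B m₀` being the first point where it
reaches `1`. -/

open Function

section Seq

variable {n : ℕ} {u v : Fin n → I} {s s' : Equiv.Perm (Fin n)}

@[simp] lemma seq_zero_s9 : seq n u s 0 = 0 := by simp [seq]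

@[simp] lemma seq_last_s9 : seq n u s (Fin.last (n + 1)) = 1 := by simp [seq]

@[simp] lemma seq_castSucc_succ (j : Fin n) : seq n u s j.castSucc.succ = u (s j) := by
  simp [seq]

lemma seq_congr (h : u ∘ s = v ∘ s') : seq n u s = seq n v s' := by
  funext i
  unfold seq
  split_ifs
  exacts [rfl, congrFun h _, rfl]

lemma seq_comp {l : I → I} (h0 : l 0 = 0) (h1 : l 1 = 1) : seq n (l ∘ u) s = l ∘ seq n u s := by
  funext i
  simp only [seq, Function.comp_apply]
  split_ifs <;> simp [h0, h1]

lemma Monotone.comp_of_seq (h : Monotone (seq n u s)) : Monotone (u ∘ s) := fun a b hab => by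
  simpa using h (Fin.succ_le_succ_iff.2 (Fin.castSucc_le_castSucc_iff.2 hab))

end Seq

section Ties

variable {m : ℕ} {α β : Type*}

lemma eq_of_forall_castSucc_eq_succ (V : Fin (m + 1) → β) {a b : Fin (m + 1)} (hab : a ≤ b)
    (h : ∀ p : Fin m, a ≤ p.castSucc → p.succ ≤ b → V p.castSucc = V p.succ) : V a = V b := by
  induction b using Fin.induction with
  | zero => rw [Fin.le_zero_iff.1 hab]
  | succ i ih =>
    rcases hab.eq_or_lt with rfl | hlt
    · rfl
    · have hai : a ≤ i.castSucc := Fin.le_castSucc_iff.2 hlt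
      rw [ih hai fun p hap hpi => h p hap (hpi.trans i.castSucc_le_succ), h i hai le_rfl]

lemma Monotone.factorsThrough_of_eq_succ [PartialOrder α] {A : Fin (m + 1) → α}
    {V : Fin (m + 1) → β} (hA : Monotone A)
    (h : ∀ p : Fin m, A p.castSucc = A p.succ → V p.castSucc = V p.succ) : FactorsThrough V A := by
  have key : ∀ a b, a ≤ b → A a = A b → V a = V b := fun a b hab hAab =>
    eq_of_forall_castSucc_eq_succ V hab fun p hap hpb =>
      h p (le_antisymm (hA p.castSucc_le_succ) ((hA hpb).trans (hAab.ge.trans (hA hap))))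
  intro a b hab
  rcases le_total a b with hle | hle
  exacts [key a b hle hab, (key b a hle hab.symm).symm]

lemma exists_castSucc_le_and_lt_succ [LinearOrder β] (B : Fin (m + 1) → β) {z : β}
    (h0 : B 0 ≤ z) {q : Fin (m + 1)} (hq : z < B q) :
    ∃ p : Fin m, p.succ ≤ q ∧ B p.castSucc ≤ z ∧ z < B p.succ := by
  induction q using Fin.induction with
  | zero => exact absurd hq (not_lt.2 h0)
  | succ i ih =>
    by_cases hi : B i.castSucc ≤ z
    · exact ⟨i, le_rfl, hi, hq⟩
    · obtain ⟨p, hp, hpz⟩ := ih (not_le.1 hi)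
      exact ⟨p, hp.trans i.castSucc_le_succ, hpz⟩

lemma exists_eq_one_iff_le {A : Fin (m + 1) → I} (hA : Monotone A) (h : A (Fin.last m) = 1) :
    ∃ m₀, ∀ q, A q = 1 ↔ m₀ ≤ q := by
  classical
  have hS : (Finset.univ.filter fun q => A q = 1).Nonempty := ⟨Fin.last m, by simp [h]⟩
  have hmin := (Finset.mem_filter.1 (Finset.min'_mem _ hS)).2
  exact ⟨_, fun q => ⟨fun hq => Finset.min'_le _ _ (by simp [hq]),
    fun hq => le_antisymm le_one' (hmin ▸ hA hq)⟩⟩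

end Ties

section Transfer

variable {n : ℕ} {u v : Fin n → I}

lemma nEquiv.symm (h : nEquiv n u v) : nEquiv n v u :=
  let ⟨s, hu, hv, hties⟩ := h
  ⟨s, hv, hu, fun i => (hties i).symm⟩

lemma nEquiv.witnessed_by (h : nEquiv n u v) {s : Equiv.Perm (Fin n)}
    (hu : Monotone (seq n u s)) :
    Monotone (seq n v s) ∧ ∀ i : Fin (n + 1),
      (seq n u s i.castSucc = seq n u s i.succ ↔ seq n v s i.castSucc = seq n v s i.succ) := by
  obtain ⟨s', hus', hvs', hties⟩ := h
  have hfac : FactorsThrough v u := fun i j hij => by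
    simpa using hus'.factorsThrough_of_eq_succ (fun p => (hties p).1)
      (a := (s'.symm i).castSucc.succ) (b := (s'.symm j).castSucc.succ) (by simpa using hij)
  have hu' : u ∘ s = u ∘ s' := Tuple.unique_monotone hu.comp_of_seq hus'.comp_of_seq
  have hv' : v ∘ s = v ∘ s' := funext fun j => hfac (congrFun hu' j)
  rw [seq_congr hu', seq_congr hv']
  exact ⟨hvs', hties⟩

end Transfer

section ComparisonMap

lemma IsComparisonMap.of_continuous {l : I → I} (hmono : Monotone l) (hcont : Continuous l)
    (h0 : l 0 = 0) {t : I} (ht : l t = 1) (hstrict : StrictMonoOn l (Set.Icc 0 t)) :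
    IsComparisonMap l := by
  refine ⟨hmono, h0, le_antisymm le_one' (ht.ge.trans (hmono le_one')), t, ?_, hstrict, ?_⟩
  · refine IsLeast.isGLB ⟨ht, fun z (hz : l z = 1) => not_lt.1 fun hzt => ?_⟩
    exact (hstrict ⟨nonneg', hzt.le⟩ ⟨nonneg', le_rfl⟩ hzt).ne (hz.trans ht.symm)
  · refine Set.eq_univ_of_forall fun w => intermediate_value_Icc nonneg' hcont.continuousOn ?_
    rw [h0, ht]
    exact ⟨nonneg', le_one'⟩

lemma IsComparisonMap.eq_of_eq_of_lt_one {l : I → I} (hl : IsComparisonMap l) {z₁ z₂ : I}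
    (h : l z₁ = l z₂) (h₁ : l z₁ < 1) : z₁ = z₂ := by
  obtain ⟨hmono, -, -, t, hglb, hstrict, himg⟩ := hl
  obtain ⟨s, hs, hs1⟩ : (1 : I) ∈ l '' Set.Icc 0 t := himg ▸ Set.mem_univ 1
  obtain rfl : s = t := le_antisymm hs.2 (hglb.1 hs1)
  have hmem : ∀ z, l z < 1 → z ∈ Set.Icc 0 s := fun z hz =>
    ⟨nonneg', le_of_not_ge fun hsz => hz.not_ge (hs1 ▸ hmono hsz)⟩
  exact hstrict.injOn (hmem z₁ h₁) (hmem z₂ (h ▸ h₁)) h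

end ComparisonMap

section LinearInterp

/-- For `b₀ = b₁` this is constantly `0`, by division by zero. -/
noncomputable def ramp (b₀ b₁ z : ℝ) : ℝ :=
  Set.projIcc (0 : ℝ) 1 zero_le_one ((z - b₀) / (b₁ - b₀))

variable {b₀ b₁ z : ℝ}

@[fun_prop]
lemma continuous_ramp : Continuous (ramp b₀ b₁) := by
  unfold ramp
  fun_prop

lemma monotone_ramp (h : b₀ ≤ b₁) : Monotone (ramp b₀ b₁) := fun _ _ hz =>
  Set.monotone_projIcc _ (div_le_div_of_nonneg_right (sub_le_sub_right hz _) (sub_nonneg.2 h))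

lemma ramp_of_le (h : b₀ ≤ b₁) (hz : z ≤ b₀) : ramp b₀ b₁ z = 0 := by
  rw [ramp, Set.projIcc_of_le_left _
    (div_nonpos_of_nonpos_of_nonneg (sub_nonpos.2 hz) (sub_nonneg.2 h))]

lemma ramp_of_ge (h : b₀ < b₁) (hz : b₁ ≤ z) : ramp b₀ b₁ z = 1 := by
  rw [ramp, Set.projIcc_of_right_le _ ((one_le_div (sub_pos.2 h)).2 (sub_le_sub_right hz _))]

lemma ramp_lt_ramp {z₁ z₂ : ℝ} (h₀ : b₀ ≤ z₁) (h₁ : z₁ < b₁) (h : z₁ < z₂) :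
    ramp b₀ b₁ z₁ < ramp b₀ b₁ z₂ := by
  have hd : 0 < b₁ - b₀ := by linarith
  have hr₀ : 0 ≤ (z₁ - b₀) / (b₁ - b₀) := div_nonneg (by linarith) hd.le
  have hr₁ : (z₁ - b₀) / (b₁ - b₀) < 1 := (div_lt_one hd).2 (by linarith)
  have hr : (z₁ - b₀) / (b₁ - b₀) < (z₂ - b₀) / (b₁ - b₀) := by gcongr
  rw [ramp, ramp, Set.coe_projIcc, Set.coe_projIcc, min_eq_right hr₁.le, max_eq_right hr₀]
  exact lt_max_of_lt_right (lt_min hr₁ hr)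

variable {m : ℕ} {a b : Fin (m + 1) → ℝ}

noncomputable def linearInterp (a b : Fin (m + 1) → ℝ) (z : ℝ) : ℝ :=
  a 0 + ∑ p : Fin m, (a p.succ - a p.castSucc) * ramp (b p.castSucc) (b p.succ) z

lemma continuous_linearInterp : Continuous (linearInterp a b) := by
  unfold linearInterp
  fun_prop

lemma monotone_linearInterp (ha : Monotone a) (hb : Monotone b) :
    Monotone (linearInterp a b) := fun _ _ hz => by
  unfold linearInterp
  gcongr with p
  · exact sub_nonneg.2 (ha p.castSucc_le_succ)
  · exact monotone_ramp (hb p.castSucc_le_succ) hz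

lemma linearInterp_lt_linearInterp (ha : Monotone a) (hb : Monotone b) {p : Fin m}
    (hp : a p.castSucc < a p.succ) {z₁ z₂ : ℝ} (h₀ : b p.castSucc ≤ z₁) (h₁ : z₁ < b p.succ)
    (h : z₁ < z₂) : linearInterp a b z₁ < linearInterp a b z₂ := by
  refine add_lt_add_right (Finset.sum_lt_sum (fun r _ => ?_) ⟨p, Finset.mem_univ p, ?_⟩) _
  · exact mul_le_mul_of_nonneg_left (monotone_ramp (hb r.castSucc_le_succ) h.le)
      (sub_nonneg.2 (ha r.castSucc_le_succ))
  · exact mul_lt_mul_of_pos_left (ramp_lt_ramp h₀ h₁ h) (sub_pos.2 hp)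

lemma linearInterp_apply_node (hb : Monotone b)
    (hab : ∀ p : Fin m, b p.castSucc = b p.succ → a p.castSucc = a p.succ) (q : Fin (m + 1)) :
    linearInterp a b (b q) = a q := by
  have hterm : ∀ p : Fin m, (a p.succ - a p.castSucc) * ramp (b p.castSucc) (b p.succ) (b q) =
      if p.castSucc < q then a p.succ - a p.castSucc else 0 := fun p => by
    rcases (hb p.castSucc_le_succ).eq_or_lt with hbp | hbp
    · simp [hab p hbp]
    · split_ifs with hpq
      · rw [ramp_of_ge hbp (hb (Fin.castSucc_lt_iff_succ_le.1 hpq)), mul_one]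
      · rw [ramp_of_le hbp.le (hb (not_lt.1 hpq)), mul_zero]
  simp only [linearInterp, hterm, ← Finset.sum_filter]
  cases q using Fin.cases with
  | zero => simp
  | succ r =>
    have hfilter : Finset.univ.filter (fun p : Fin m => p.castSucc < r.succ) = Finset.Iic r := by
      ext
      simp [Fin.castSucc_lt_succ_iff]
    rw [hfilter, Fin.sum_Iic_sub]
    ring

end LinearInterp

section Construction

variable {m : ℕ} {A B : Fin (m + 1) → I}

lemma exists_comparisonMap_of_ties (hA : Monotone A) (hB : Monotone B) (hA0 : A 0 = 0)
    (hA1 : A (Fin.last m) = 1) (hB0 : B 0 = 0)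
    (hties : ∀ p : Fin m, A p.castSucc < 1 →
      (A p.castSucc = A p.succ ↔ B p.castSucc = B p.succ)) :
    ∃ l : I → I, IsComparisonMap l ∧ ∀ q, l (B q) = A q := by
  have hBA : ∀ p : Fin m, B p.castSucc = B p.succ → A p.castSucc = A p.succ := fun p hp => by
    by_cases hp1 : A p.castSucc < 1
    · exact (hties p hp1).2 hp
    · exact le_antisymm (hA p.castSucc_le_succ) (le_one'.trans (not_lt.1 hp1))
  set g := linearInterp (fun q => (A q : ℝ)) (fun q => (B q : ℝ))
  have hgmono : Monotone g := monotone_linearInterp (fun _ _ h => hA h) (fun _ _ h => hB h)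
  have hnode : ∀ q, g (B q) = A q :=
    linearInterp_apply_node (fun _ _ h => hB h) fun p h => congrArg _ (hBA p (Subtype.ext h))
  obtain ⟨m₀, hm₀⟩ := exists_eq_one_iff_le hA hA1
  have hg0 : g 0 = 0 := by simpa [hA0, hB0] using hnode 0
  have hgm₀ : g (B m₀) = 1 := by simpa [(hm₀ m₀).2 le_rfl] using hnode m₀
  have hgI : ∀ z ∈ Set.Icc 0 (B m₀), g z ∈ Set.Icc (0 : ℝ) 1 := fun z hz =>
    ⟨hg0 ▸ hgmono hz.1, hgm₀ ▸ hgmono hz.2⟩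
  let l : I → I := fun z => Set.projIcc 0 1 zero_le_one (g z)
  refine ⟨l, .of_continuous ((Set.monotone_projIcc _).comp fun _ _ h => hgmono h)
    (continuous_projIcc.comp (continuous_linearInterp.comp continuous_subtype_val))
    (by simp [l, hg0]) (t := B m₀) (by simp [l, hgm₀]) ?_, fun q => by simp [l, hnode]⟩
  intro z₁ hz₁ z₂ hz₂ h
  obtain ⟨p, hpm₀, hp₀, hp₁⟩ :=
    exists_castSucc_le_and_lt_succ B (hB0 ▸ hz₁.1) (h.trans_le hz₂.2)
  have hAp : A p.castSucc < 1 := lt_of_le_of_ne le_one' fun hp =>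
    ((hm₀ _).1 hp).not_gt (Fin.castSucc_lt_succ.trans_le hpm₀)
  have hAlt : A p.castSucc < A p.succ := (hA p.castSucc_le_succ).lt_of_ne fun hp =>
    (hp₀.trans_lt hp₁).ne ((hties p hAp).1 hp)
  exact Set.strictMonoOn_projIcc _ (hgI z₁ hz₁) (hgI z₂ hz₂)
    (linearInterp_lt_linearInterp (fun _ _ h => hA h) (fun _ _ h => hB h) hAlt hp₀ hp₁ h)

lemma exists_comparisonMap_iff (hA : Monotone A) (hB : Monotone B) (hA0 : A 0 = 0)
    (hA1 : A (Fin.last m) = 1) (hB0 : B 0 = 0) :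
    (∃ l : I → I, IsComparisonMap l ∧ ∀ q, l (B q) = A q) ↔
      ∀ p : Fin m, A p.castSucc < 1 → (A p.castSucc = A p.succ ↔ B p.castSucc = B p.succ) := by
  refine ⟨?_, exists_comparisonMap_of_ties hA hB hA0 hA1 hB0⟩
  rintro ⟨l, hl, hlB⟩ p hp
  simp only [← hlB] at hp ⊢
  exact ⟨fun h => hl.eq_of_eq_of_lt_one h hp, congrArg l⟩

end Construction

/-- `leAssign n μ ν` unfolds to
`∃ s, Monotone (seq n μ s) ∧ Monotone (seq n ν s) ∧ PatternLE n (seq n μ s) (seq n ν s)`. -/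
def PatternLE (n : ℕ) (A B : Fin (n + 2) → I) : Prop :=
  ∃ k : ℕ, k ≤ n ∧
    (∀ i : Fin (n + 1), (i : ℕ) ≤ k →
      (A i.castSucc = A i.succ ↔ B i.castSucc = B i.succ)) ∧
    ∀ i : Fin (n + 1), k < (i : ℕ) → A i.castSucc = A i.succ

section PatternLE

variable {n : ℕ} {A A' B B' : Fin (n + 2) → I}

lemma patternLE_congr (hA : ∀ i : Fin (n + 1), A i.castSucc = A i.succ ↔ A' i.castSucc = A' i.succ)
    (hB : ∀ i : Fin (n + 1), B i.castSucc = B i.succ ↔ B' i.castSucc = B' i.succ) :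
    PatternLE n A B ↔ PatternLE n A' B' := by
  simp only [PatternLE, hA, hB]

lemma patternLE_iff (hA : Monotone A) (hA0 : A 0 = 0) (hA1 : A (Fin.last (n + 1)) = 1) :
    PatternLE n A B ↔ ∀ i : Fin (n + 1), A i.castSucc < 1 →
      (A i.castSucc = A i.succ ↔ B i.castSucc = B i.succ) := by
  constructor
  · rintro ⟨k, -, hle, hgt⟩ i hi
    refine (le_or_gt (i : ℕ) k).elim (hle i) fun hki => absurd hi (not_lt.2 ?_)
    rw [← hA1, eq_of_forall_castSucc_eq_succ A (Fin.le_last _) fun p hip _ =>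
      hgt p (hki.trans_le (Fin.castSucc_le_castSucc_iff.1 hip))]
  · intro hties
    obtain ⟨m₀, hm₀⟩ := exists_eq_one_iff_le hA hA1
    have hle : ∀ q : Fin (n + 2), A q = 1 ↔ (m₀ : ℕ) ≤ q := fun q => (hm₀ q).trans Fin.le_def
    have hpos : 0 < (m₀ : ℕ) :=
      Nat.pos_of_ne_zero fun h => zero_ne_one (hA0.symm.trans ((hle 0).2 (by simp [h])))
    refine ⟨m₀ - 1, by omega, fun i hi => hties i (lt_of_le_of_ne le_one' ?_), fun i hi => ?_⟩
    · rw [Ne, hle]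
      simp only [Fin.val_castSucc]
      omega
    · rw [(hle _).2 (by simp only [Fin.val_castSucc]; omega), (hle _).2 (by simp; omega)]

end PatternLE

theorem le_iff_comparisonMap {n : ℕ} (f : Fin n → I → I) (μ ν : Fin n → I) (x y : I)
    (hμ : realizedAt f μ x) (hν : realizedAt f ν y) :
    leAssign n μ ν ↔
      ∃ l : I → I, IsComparisonMap l ∧ ∀ i, l (f i y) = f i x := by
  constructor
  · rintro ⟨s, hμs, hνs, hle⟩
    obtain ⟨hxs, hμx⟩ := hμ.witnessed_by hμs
    obtain ⟨hys, hνy⟩ := hν.witnessed_by hνs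
    have hties := (patternLE_iff hxs seq_zero_s9 seq_last_s9).1 ((patternLE_congr hμx hνy).1 hle)
    obtain ⟨l, hl, hlB⟩ := (exists_comparisonMap_iff hxs hys seq_zero_s9 seq_last_s9 seq_zero_s9).2 hties
    exact ⟨l, hl, fun i => by simpa using hlB (s.symm i).castSucc.succ⟩
  · rintro ⟨l, hl, hlf⟩
    obtain ⟨s, hνs, hys, hνy⟩ := hν
    have ⟨hmono, h0, h1, _⟩ := hl
    have hxy : seq n (fun i => f i x) s = l ∘ seq n (fun i => f i y) s := by
      rw [← seq_comp h0 h1]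
      exact congrArg (seq n · s) (funext fun i => (hlf i).symm)
    have hxs : Monotone (seq n (fun i => f i x) s) := hxy ▸ hmono.comp hys
    obtain ⟨hμs, hxμ⟩ := hμ.symm.witnessed_by hxs
    have hties := (exists_comparisonMap_iff hxs hys seq_zero_s9 seq_last_s9 seq_zero_s9).1
      ⟨l, hl, fun q => (congrFun hxy q).symm⟩
    exact ⟨s, hμs, hνs, (patternLE_congr hxμ fun i => (hνy i).symm).1
      ((patternLE_iff hxs seq_zero_s9 seq_last_s9).2 hties)⟩
end

section
/- For a family P of fuzzy sets with associated formula α_P: the implication α_P → τₙ is a tautology of 4-valued Gödel logic 𝔾₄ (i.e., evaluates to 1 under all assignments into {0, 1/3, 2/3, 1}) if and only if it is a tautology of infinite-valued Gödel logic 𝔾∞ (evaluates to 1 under all [0,1]-valued assignments), where τₙ = ⋀_{1≤i<j<k≤n} ¬(Xᵢ ∧ Xⱼ ∧ Xₖ). -/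
open unitInterval

def bigOr {n : ℕ} (l : List (Fml n)) : Fml n := l.foldr Fml.or Fml.bot
def bigAnd {n : ℕ} (l : List (Fml n)) : Fml n := l.foldr Fml.and Fml.top

/-- The 2-overlapping axiom τₙ = ⋀_{i<j<k} ¬(Xᵢ ∧ Xⱼ ∧ Xₖ). -/
def tau (n : ℕ) : Fml n :=
  bigAnd ((List.finRange n).map fun i =>
    bigAnd (((List.finRange n).filter fun j => i < j).map fun j =>
      bigAnd (((List.finRange n).filter fun k => j < k).map fun k =>
        Fml.neg (Fml.and (.var i) (Fml.and (.var j) (.var k))))))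

/-- `a` axiomatizes the theory of P: the formulas valid over P are exactly the
Gödel consequences of `a`. -/
def Axiomatizes {n : ℕ} (f : Fin n → I → I) (a : Fml n) : Prop :=
  ∀ φ : Fml n,
    (∀ x : I, eval (fun i => f i x) φ = 1) ↔
      ∀ ν : Fin n → I, eval ν a = 1 → eval ν φ = 1
open Classical in
lemma eval_comp {n : ℕ} (ν : Fin n → I) (h : I → I) (hm : Monotone h)
    (h0 : h 0 = 0) (h1 : h 1 = 1)
    (ht : ∀ x y : I, x < y → h x = h y → h y = 1) :
    ∀ ψ : Fml n, eval (fun i => h (ν i)) ψ = h (eval ν ψ) := by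
  intro ψ
  induction ψ with
  | var i => simp [eval]
  | bot => simp [eval, h0]
  | top => simp [eval, h1]
  | and a b iha ihb => simp only [eval, iha, ihb]; exact (hm.map_min).symm
  | or a b iha ihb => simp only [eval, iha, ihb]; exact (hm.map_max).symm
  | imp a b iha ihb =>
    simp only [eval, iha, ihb]
    rcases le_or_gt (eval ν a) (eval ν b) with hle | hlt
    · rw [if_pos hle, if_pos (hm hle), h1]
    · rw [if_neg (not_le.mpr hlt)]
      by_cases hc : h (eval ν a) ≤ h (eval ν b)
      · rw [if_pos hc]
        have heq : h (eval ν b) = h (eval ν a) := le_antisymm (hm hlt.le) hc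
        rw [heq, ht _ _ hlt heq]
      · rw [if_neg hc]
  | neg a iha =>
    simp only [eval, iha]
    rcases eq_or_lt_of_le (nonneg' : (0 : I) ≤ eval ν a) with hz | hp
    · rw [← hz]; simp [h0, h1]
    · have hne : ¬ h (eval ν a) ≤ 0 := by
        intro hle
        have : h (eval ν a) = h 0 := le_antisymm (by rwa [h0]) (hm nonneg')
        have := ht 0 (eval ν a) hp this.symm
        rw [this] at hle
        exact absurd (le_antisymm hle nonneg') one_ne_zero
      rw [if_neg (fun hle => absurd (le_antisymm hle nonneg') hp.ne'),
        if_neg hne, h0]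

lemma eval_bigAnd_mem {n : ℕ} (ν : Fin n → I) (l : List (Fml n))
    (hl : ∀ φ ∈ l, eval ν φ = 0 ∨ eval ν φ = 1) :
    eval ν (bigAnd l) = 0 ∨ eval ν (bigAnd l) = 1 := by
  induction l with
  | nil => right; simp [bigAnd, eval]
  | cons c t ih =>
    have hc := hl c (by simp)
    have ht' := ih (fun φ hφ => hl φ (by simp [hφ]))
    have hrw : eval ν (bigAnd (c :: t)) = min (eval ν c) (eval ν (bigAnd t)) := rfl
    rcases hc with h | h
    · left; rw [hrw, h]; exact min_eq_left nonneg'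
    · rcases ht' with h' | h'
      · left; rw [hrw, h']; exact min_eq_right nonneg'
      · right; rw [hrw, h, h']; simp

lemma eval_tau_mem {n : ℕ} (ν : Fin n → I) :
    eval ν (tau n) = 0 ∨ eval ν (tau n) = 1 := by
  unfold tau
  apply eval_bigAnd_mem
  intro φ hφ
  simp only [List.mem_map] at hφ
  obtain ⟨i, -, rfl⟩ := hφ
  apply eval_bigAnd_mem
  intro φ hφ
  simp only [List.mem_map] at hφ
  obtain ⟨j, -, rfl⟩ := hφ
  apply eval_bigAnd_mem
  intro φ hφ
  simp only [List.mem_map] at hφ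
  obtain ⟨k, -, rfl⟩ := hφ
  show (if _ ≤ (0:I) then (1:I) else 0) = 0 ∨ (if _ ≤ (0:I) then (1:I) else 0) = 1
  split <;> simp
theorem G4_tautology_iff_Ginf_tautology {n : ℕ} (f : Fin n → I → I) (a : Fml n)
    (ha : Axiomatizes f a) :
    (∀ ν : Fin n → I, (∀ i, (ν i : ℝ) ∈ ({0, 1/3, 2/3, 1} : Set ℝ)) →
        eval ν (Fml.imp a (tau n)) = 1) ↔
      (∀ ν : Fin n → I, eval ν (Fml.imp a (tau n)) = 1) := by
  classical
  constructor
  · intro H ν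
    show (if eval ν a ≤ eval ν (tau n) then (1:I) else eval ν (tau n)) = 1
    split
    · rfl
    · rename_i hnle
      exfalso
      -- eval ν (tau n) = 0
      have hT : eval ν (tau n) = 0 := by
        rcases eval_tau_mem ν with h | h
        · exact h
        · exact absurd (h ▸ le_one' : eval ν a ≤ eval ν (tau n)) hnle
      set h : I → I := fun x => if x = 0 then 0 else 1 with hh
      have hm : Monotone h := by
        intro x y hxy
        simp only [hh]
        split <;> split
        · exact le_rfl
        · exact nonneg'
        · rename_i hx hy
          exact absurd (le_antisymm (hy ▸ hxy) nonneg') hx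
        · exact le_rfl
      have h0 : h 0 = 0 := by simp [hh]
      have h1 : h 1 = 1 := by
        simp only [hh]
        rw [if_neg]
        intro e
        have : (1:ℝ) = 0 := by simpa using congrArg Subtype.val e
        norm_num at this
      have ht : ∀ x y : I, x < y → h x = h y → h y = 1 := by
        intro x y hxy heq
        simp only [hh] at heq ⊢
        split
        · rename_i hy
          rw [if_pos hy] at heq
          rw [if_neg (by rintro rfl; exact absurd (hy ▸ hxy) (lt_irrefl _))] at heq
          exact heq.symm
        · rfl
      have hmem : ∀ i, ((h (ν i) : I) : ℝ) ∈ ({0, 1/3, 2/3, 1} : Set ℝ) := by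
        intro i
        simp only [hh]
        split
        · left; norm_num
        · right; right; right; norm_num
      have key := H (fun i => h (ν i)) hmem
      rw [eval_comp ν h hm h0 h1 ht (Fml.imp a (tau n))] at key
      have : eval ν (Fml.imp a (tau n)) = 0 := by
        show (if eval ν a ≤ eval ν (tau n) then (1:I) else eval ν (tau n)) = 0
        rw [if_neg hnle, hT]
      rw [this, h0] at key
      have : (0:ℝ) = 1 := by simpa using congrArg Subtype.val key
      norm_num at this
  · intro H ν _
    exact H ν
end
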